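/- arXiv:2304.05710 — 2 statements merged into one kernel-verified Lean document; each statement's English description precedes it below -/
import Mathlib

section
/- Consider the block matrix A = [[0, I, 0], [-M⁻¹(L+Θ), -M⁻¹H, M⁻¹Φ], [0, -(κ_D/τ)I, -(1/τ)I]] where L is the Laplacian of an undirected connected graph, M, H, Θ, Φ are diagonal with positive diagonals, and κ_D, τ > 0. Then A is Hurwitz: every eigenvalue of A has strictly negative real part. -/
/-!
Energy argument on an eigenvector. If `A (x, y, z) = μ (x, y, z)` with `Re μ ≥ 0`, the first row
gives `y = μ x` and the last one `z = c y` with `c = -(κ/τ) / (μ + 1/τ)`, so `Re c ≤ 0`. Pairing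
the second row, multiplied by `M`, with `y` gives
`Re μ (y*My + x*(L+Θ)x) + y*Hy = Re c · y*Φy ≤ 0`,
so `y*Hy = 0`, hence `y = 0`, `z = 0`, `(L+Θ)x = 0` and `x = 0`. That `L + Θ` is positive
definite follows from Gershgorin's theorem, as the matrix is symmetric and strictly diagonally
dominant.
-/

open Matrix

def blk3 {N : ℕ} (A11 A12 A13 A21 A22 A23 A31 A32 A33 : Matrix (Fin N) (Fin N) ℝ) :
    Matrix (Fin N ⊕ (Fin N ⊕ Fin N)) (Fin N ⊕ (Fin N ⊕ Fin N)) ℝ :=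
  Matrix.of fun i j =>
    match i, j with
    | .inl i, .inl j => A11 i j
    | .inl i, .inr (.inl j) => A12 i j
    | .inl i, .inr (.inr j) => A13 i j
    | .inr (.inl i), .inl j => A21 i j
    | .inr (.inl i), .inr (.inl j) => A22 i j
    | .inr (.inl i), .inr (.inr j) => A23 i j
    | .inr (.inr i), .inl j => A31 i j
    | .inr (.inr i), .inr (.inl j) => A32 i j
    | .inr (.inr i), .inr (.inr j) => A33 i j

open scoped ComplexOrder

variable {n : Type*} [Fintype n]

def Matrix.IsHurwitz [DecidableEq n] (A : Matrix n n ℂ) : Prop :=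
  ∀ μ ∈ spectrum ℂ A, μ.re < 0

theorem Matrix.exists_mulVec_eq_smul_of_mem_spectrum [DecidableEq n] {K : Type*} [Field K]
    {A : Matrix n n K} {μ : K} (hμ : μ ∈ spectrum K A) : ∃ v ≠ 0, A *ᵥ v = μ • v := by
  rw [← spectrum_toLin', ← Module.End.hasEigenvalue_iff_mem_spectrum] at hμ
  obtain ⟨v, hv, hv0⟩ := hμ.exists_hasEigenvector
  exact ⟨v, hv0, by simpa using Module.End.mem_eigenspace_iff.1 hv⟩

theorem Matrix.IsHermitian.posDef_of_sum_norm_lt_re [DecidableEq n] {𝕜 : Type*} [RCLike 𝕜]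
    {A : Matrix n n 𝕜} (hA : A.IsHermitian)
    (hdom : ∀ k, ∑ j ∈ Finset.univ.erase k, ‖A k j‖ < RCLike.re (A k k)) : A.PosDef := by
  refine hA.posDef_iff_eigenvalues_pos.2 fun i => ?_
  have hμ : Module.End.HasEigenvalue (toLin' A) (hA.eigenvalues i : 𝕜) :=
    Module.End.hasEigenvalue_of_hasEigenvector
      ⟨Module.End.mem_eigenspace_iff.2 (by simpa using hA.mulVec_eigenvectorBasis i),
        by simpa using hA.eigenvectorBasis.orthonormal.ne_zero i⟩
  obtain ⟨k, hk⟩ := eigenvalue_mem_ball hμ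
  rw [Metric.mem_closedBall, dist_comm, dist_eq_norm] at hk
  have hre : RCLike.re (A k k) - hA.eigenvalues i ≤ ‖A k k - hA.eigenvalues i‖ := by
    simpa using RCLike.re_le_norm (A k k - hA.eigenvalues i)
  linarith [hdom k]

theorem exists_re_nonpos_smul_of_add_smul_eq {V : Type*} [AddCommGroup V] [Module ℂ V]
    {α β : ℝ} (hα : 0 < α) (hβ : 0 ≤ β) {μ : ℂ} (hμ : 0 ≤ μ.re) {y z : V}
    (hz : (μ + α) • z = -(β : ℂ) • y) : ∃ c : ℂ, c.re ≤ 0 ∧ z = c • y := by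
  have hre : 0 < (μ + α).re := by
    rw [Complex.add_re, Complex.ofReal_re]
    linarith
  refine ⟨-β / (μ + α), ?_, ?_⟩
  · simp only [Complex.div_re, Complex.neg_re, Complex.neg_im, Complex.ofReal_re,
      Complex.ofReal_im, neg_zero, zero_mul, zero_div, add_zero, neg_mul]
    exact div_nonpos_of_nonpos_of_nonneg (neg_nonpos.2 (mul_nonneg hβ hre.le))
      (Complex.normSq_nonneg _)
  · have hne : μ + α ≠ 0 := fun h => hre.ne' (by simp [h])
    rw [div_eq_inv_mul, mul_smul, ← hz, inv_smul_smul₀ hne]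

theorem eq_zero_of_damped_mulVec_eq {M H K Φ : Matrix n n ℂ} (hM : M.PosSemidef)
    (hH : H.PosDef) (hK : K.PosDef) (hΦ : Φ.PosSemidef) {α β : ℝ} (hα : 0 < α) (hβ : 0 ≤ β)
    {μ : ℂ} (hμ : 0 ≤ μ.re) {x y z : n → ℂ} (hxy : y = μ • x)
    (hy : μ • (M *ᵥ y) + H *ᵥ y + K *ᵥ x = Φ *ᵥ z) (hz : (μ + α) • z = -(β : ℂ) • y) :
    x = 0 ∧ y = 0 ∧ z = 0 := by
  obtain ⟨c, hc, rfl⟩ := exists_re_nonpos_smul_of_add_smul_eq hα hβ hμ hz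
  have henergy : μ * (star y ⬝ᵥ (M *ᵥ y)) + star y ⬝ᵥ (H *ᵥ y)
      + star μ * (star x ⬝ᵥ (K *ᵥ x)) = c * (star y ⬝ᵥ (Φ *ᵥ y)) := by
    have hKxy : star y ⬝ᵥ (K *ᵥ x) = star μ * (star x ⬝ᵥ (K *ᵥ x)) := by
      rw [hxy, star_smul, smul_dotProduct, smul_eq_mul]
    have := congrArg (star y ⬝ᵥ ·) hy
    simp only [dotProduct_add, dotProduct_smul, mulVec_smul, smul_eq_mul] at this
    rwa [hKxy] at this
  have him {B : Matrix n n ℂ} (hB : B.IsHermitian) (v : n → ℂ) :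
      (star v ⬝ᵥ (B *ᵥ v)).im = 0 :=
    hB.im_star_dotProduct_mulVec_self v
  have hre := congrArg Complex.re henergy
  simp only [Complex.add_re, Complex.mul_re, Complex.star_def, Complex.conj_re, Complex.conj_im,
    him hM.isHermitian, him hK.isHermitian, him hΦ.isHermitian, mul_zero, sub_zero] at hre
  have hy0 : y = 0 := by
    by_contra hy0
    have hHy : 0 < (star y ⬝ᵥ (H *ᵥ y)).re := hH.re_dotProduct_pos hy0
    have hMy : 0 ≤ (star y ⬝ᵥ (M *ᵥ y)).re := hM.re_dotProduct_nonneg y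
    have hKx : 0 ≤ (star x ⬝ᵥ (K *ᵥ x)).re := hK.posSemidef.re_dotProduct_nonneg x
    have hΦy : 0 ≤ (star y ⬝ᵥ (Φ *ᵥ y)).re := hΦ.re_dotProduct_nonneg y
    linarith [mul_nonneg hμ hMy, mul_nonneg hμ hKx, mul_nonpos_of_nonpos_of_nonneg hc hΦy]
  subst hy0
  have hKx : K *ᵥ x = 0 := by simpa using hy
  refine ⟨?_, rfl, smul_zero c⟩
  by_contra hx0
  simpa [hKx] using hK.re_dotProduct_pos hx0

theorem isHurwitz_fromBlocks_damped [DecidableEq n] {W H K Φ : Matrix n n ℂ} (hW : W.PosDef)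
    (hH : H.PosDef) (hK : K.PosDef) (hΦ : Φ.PosSemidef) {α β : ℝ} (hα : 0 < α) (hβ : 0 ≤ β) :
    (fromBlocks 0 (fromCols 1 0) (fromRows (-(W * K)) 0)
      (fromBlocks (-(W * H)) (W * Φ) (-((β : ℂ) • 1)) (-((α : ℂ) • 1)))).IsHurwitz := by
  intro μ hμ
  by_contra! hμre
  obtain ⟨v, hv0, hv⟩ := exists_mulVec_eq_smul_of_mem_spectrum hμ
  obtain ⟨x, y, z, rfl⟩ : ∃ x y z, v = Sum.elim x (Sum.elim y z) :=
    ⟨v ∘ Sum.inl, v ∘ Sum.inr ∘ Sum.inl, v ∘ Sum.inr ∘ Sum.inr, by ext (i | i | i) <;> rfl⟩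
  have hrow1 := congrArg (· ∘ Sum.inl) hv
  have hrow2 := congrArg (· ∘ Sum.inr ∘ Sum.inl) hv
  have hrow3 := congrArg (· ∘ Sum.inr ∘ Sum.inr) hv
  simp only [fromBlocks_mulVec, fromCols_mulVec, fromRows_mulVec, ← Sum.elim_add_add,
    Sum.elim_comp_inl, Sum.elim_comp_inr, ← Function.comp_assoc, Pi.smul_comp, zero_mulVec,
    one_mulVec, zero_add, add_zero, neg_mulVec, smul_mulVec] at hrow1 hrow2 hrow3
  have hWW : W⁻¹ * W = 1 := nonsing_inv_mul W (isUnit_iff_ne_zero.2 hW.det_pos.ne')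
  have hrow2' := congrArg (W⁻¹ *ᵥ ·) hrow2
  simp only [mulVec_add, mulVec_neg, mulVec_mulVec, ← mul_assoc, hWW, one_mul,
    mulVec_smul] at hrow2'
  obtain ⟨rfl, rfl, rfl⟩ := eq_zero_of_damped_mulVec_eq hW.inv.posSemidef hH hK hΦ hα hβ hμre
    hrow1 (by linear_combination (norm := module) -hrow2')
    (by linear_combination (norm := module) -hrow3)
  exact hv0 (by simp)

def weightedLaplacian [DecidableEq n] (a : Matrix n n ℝ) : Matrix n n ℝ :=
  of fun i j => if i = j then ∑ k, a i k else -(a i j)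

theorem posDef_weightedLaplacian_add_diagonal [DecidableEq n] {a : Matrix n n ℝ}
    (hsymm : ∀ i j, a i j = a j i) (hnonneg : ∀ i j, 0 ≤ a i j) {θ : n → ℝ}
    (hθ : ∀ i, 0 < θ i) : ((weightedLaplacian a + diagonal θ).map (Complex.ofReal ·)).PosDef := by
  refine IsHermitian.posDef_of_sum_norm_lt_re ?_ fun k => ?_
  · ext i j
    by_cases hij : i = j
    · subst hij
      simp [weightedLaplacian]
    · simp [weightedLaplacian, hij, Ne.symm hij, hsymm i j]
  · have hoff : ∀ j ∈ Finset.univ.erase k,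
        ‖((weightedLaplacian a + diagonal θ).map (Complex.ofReal ·)) k j‖ = a k j := fun j hj => by
      simp [weightedLaplacian, Ne.symm (Finset.ne_of_mem_erase hj), abs_of_nonneg (hnonneg k j)]
    rw [Finset.sum_congr rfl hoff]
    have hle : ∑ j ∈ Finset.univ.erase k, a k j ≤ ∑ j, a k j :=
      Finset.sum_le_sum_of_subset_of_nonneg (Finset.erase_subset k _) fun j _ _ => hnonneg k j
    simpa [weightedLaplacian] using hle.trans_lt (lt_add_of_pos_right _ (hθ k))

theorem stmt3_general {N : ℕ} (a : Matrix (Fin N) (Fin N) ℝ)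
    (ha_symm : ∀ i j, a i j = a j i) (ha_nonneg : ∀ i j, 0 ≤ a i j)
    (L : Matrix (Fin N) (Fin N) ℝ)
    (hL : L = Matrix.of fun i j => if i = j then ∑ k, a i k else -(a i j))
    (θ m h φ : Fin N → ℝ)
    (hθ : ∀ i, 0 < θ i) (hm : ∀ i, 0 < m i) (hh : ∀ i, 0 < h i) (hφ : ∀ i, 0 < φ i)
    (κ τ : ℝ) (hκ : 0 < κ) (hτ : 0 < τ)
    (A : Matrix (Fin N ⊕ (Fin N ⊕ Fin N)) (Fin N ⊕ (Fin N ⊕ Fin N)) ℝ)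
    (hA : A = blk3 0 1 0
      (-(Matrix.diagonal (fun i => (m i)⁻¹) * (L + Matrix.diagonal θ)))
      (-(Matrix.diagonal (fun i => (m i)⁻¹) * Matrix.diagonal h))
      (Matrix.diagonal (fun i => (m i)⁻¹) * Matrix.diagonal φ)
      0 (-((κ / τ) • (1 : Matrix (Fin N) (Fin N) ℝ)))
      (-(τ⁻¹ • (1 : Matrix (Fin N) (Fin N) ℝ)))) :
    ∀ μ ∈ spectrum ℂ (A.map (Complex.ofReal ·)), μ.re < 0 := by
  have hK : ((L + diagonal θ).map (Complex.ofReal ·)).PosDef :=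
    hL ▸ posDef_weightedLaplacian_add_diagonal ha_symm ha_nonneg hθ
  set K := (L + diagonal θ).map (Complex.ofReal ·)
  set W : Matrix (Fin N) (Fin N) ℂ := diagonal fun i => (((m i)⁻¹ : ℝ) : ℂ)
  have hW : W.PosDef := posDef_diagonal_iff.2 fun i => Complex.zero_lt_real.2 (inv_pos.2 (hm i))
  have hH : (diagonal fun i => (h i : ℂ)).PosDef :=
    posDef_diagonal_iff.2 fun i => Complex.zero_lt_real.2 (hh i)
  have hΦ : (diagonal fun i => (φ i : ℂ)).PosSemidef :=
    posSemidef_diagonal_iff.2 fun i => Complex.zero_le_real.2 (hφ i).le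
  have hAc : A.map (Complex.ofReal ·) = fromBlocks 0 (fromCols 1 0) (fromRows (-(W * K)) 0)
      (fromBlocks (-(W * diagonal fun i => (h i : ℂ))) (W * diagonal fun i => (φ i : ℂ))
        (-(((κ / τ : ℝ) : ℂ) • 1)) (-(((τ⁻¹ : ℝ) : ℂ) • 1))) := by
    subst hA
    ext (i | i | i) (j | j | j) <;>
      simp [W, K, blk3, diagonal_apply, one_apply, apply_ite (Complex.ofReal ·)] <;>
      split_ifs <;> simp_all
  rw [hAc]
  exact isHurwitz_fromBlocks_damped hW hH hK hΦ (inv_pos.2 hτ) (div_pos hκ hτ).le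

/-- The closed-loop matrix
`A = [[0, I, 0], [-M⁻¹(L+Θ), -M⁻¹H, M⁻¹Φ], [0, -(κ_D/τ)I, -(1/τ)I]]` built from the
Laplacian `L` of a connected undirected graph and positive diagonal `M, H, Θ, Φ`,
`κ_D, τ > 0`, is Hurwitz: every complex eigenvalue has strictly negative real part. -/
theorem stmt3 {N : ℕ} (a : Matrix (Fin N) (Fin N) ℝ)
    (ha_symm : ∀ i j, a i j = a j i) (ha_nonneg : ∀ i j, 0 ≤ a i j)
    (ha_diag : ∀ i, a i i = 0)
    (ha_conn : ∀ i j : Fin N, Relation.ReflTransGen (fun u v => a u v ≠ 0) i j)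
    (L : Matrix (Fin N) (Fin N) ℝ)
    (hL : L = Matrix.of fun i j => if i = j then ∑ k, a i k else -(a i j))
    (θ m h φ : Fin N → ℝ)
    (hθ : ∀ i, 0 < θ i) (hm : ∀ i, 0 < m i) (hh : ∀ i, 0 < h i) (hφ : ∀ i, 0 < φ i)
    (κ τ : ℝ) (hκ : 0 < κ) (hτ : 0 < τ)
    (A : Matrix (Fin N ⊕ (Fin N ⊕ Fin N)) (Fin N ⊕ (Fin N ⊕ Fin N)) ℝ)
    (hA : A = blk3 0 1 0
      (-(Matrix.diagonal (fun i => (m i)⁻¹) * (L + Matrix.diagonal θ)))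
      (-(Matrix.diagonal (fun i => (m i)⁻¹) * Matrix.diagonal h))
      (Matrix.diagonal (fun i => (m i)⁻¹) * Matrix.diagonal φ)
      0 (-((κ / τ) • (1 : Matrix (Fin N) (Fin N) ℝ)))
      (-(τ⁻¹ • (1 : Matrix (Fin N) (Fin N) ℝ)))) :
    ∀ μ ∈ spectrum ℂ (A.map (Complex.ofReal ·)), μ.re < 0 :=
  stmt3_general a ha_symm ha_nonneg L hL θ m h φ hθ hm hh hφ κ τ hκ hτ A hA
end

section
/- Let σ satisfy 0 < σ < min{min_i (h_i/m_i), 4 min_i θ_i / (κ_D max_i φ_i)} where m_i, h_i, θ_i, φ_i > 0 and κ_D, τ > 0. Then the block matrix P̄ = [[M⁻¹(L+Θ+σH), σI, 0], [σI, I, 0], [0, 0, κ_D⁻¹τM⁻¹Φ]] is symmetric positive definite, where L is a symmetric positive semidefinite matrix (Laplacian of a connected undirected graph) and M, H, Θ, Φ are the diagonal matrices diag(m_i), diag(h_i), diag(θ_i), diag(φ_i), assuming M = I (so that M⁻¹(L+Θ+σH) is symmetric). -/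
/-!
The third diagonal block `κ⁻¹τΦ` is positive definite and decouples from the rest. The
remaining 2×2 block `[[X, σI], [σI, I]]` is positive definite as soon as its Schur complement
`X - σ²I = L + diag(θᵢ + σ(hᵢ - σ))` is, and that holds because `L ⪰ 0`, `θᵢ > 0` and `σ < hᵢ`.
-/

open Matrix

open scoped ComplexOrder

namespace Matrix

variable {m n 𝕜 : Type*} [Fintype m] [Fintype n] [DecidableEq m] [DecidableEq n] [RCLike 𝕜]

theorem PosDef.fromBlocks_zero {A : Matrix m m 𝕜} {D : Matrix n n 𝕜} (hA : A.PosDef)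
    (hD : D.PosDef) : (fromBlocks A 0 0 D).PosDef := by
  have : Invertible A := hA.isUnit.invertible
  have hsemi : (fromBlocks A 0 0 D).PosSemidef := by
    simpa using (PosDef.fromBlocks₁₁ (0 : Matrix m n 𝕜) D hA).mpr (by simpa using hD.posSemidef)
  rw [hsemi.posDef_iff_det_ne_zero, det_fromBlocks_zero₂₁]
  exact mul_ne_zero (isUnit_iff_isUnit_det A |>.mp hA.isUnit).ne_zero
    (isUnit_iff_isUnit_det D |>.mp hD.isUnit).ne_zero

theorem PosDef.fromBlocks_one₂₂ {A : Matrix m m 𝕜} (B : Matrix m n 𝕜)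
    (h : (A - B * Bᴴ).PosDef) : (fromBlocks A B Bᴴ 1).PosDef := by
  have : Invertible (1 : Matrix n n 𝕜) := invertibleOne
  have hsemi : (fromBlocks A B Bᴴ 1).PosSemidef := by
    simpa using (PosDef.fromBlocks₂₂ A B PosDef.one).mpr (by simpa using h.posSemidef)
  rw [hsemi.posDef_iff_det_ne_zero, det_fromBlocks_one₂₂]
  exact (isUnit_iff_isUnit_det _ |>.mp h.isUnit).ne_zero

end Matrix

theorem blk3_eq_submatrix_fromBlocks {N : ℕ} (A₁₁ A₁₂ A₂₁ A₂₂ A₃₃ : Matrix (Fin N) (Fin N) ℝ) :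
    blk3 A₁₁ A₁₂ 0 A₂₁ A₂₂ 0 0 0 A₃₃ =
      (fromBlocks (fromBlocks A₁₁ A₁₂ A₂₁ A₂₂) 0 0 A₃₃).submatrix
        (Equiv.sumAssoc _ _ _).symm (Equiv.sumAssoc _ _ _).symm := by
  ext (i | i | i) (j | j | j) <;> rfl

theorem stmt5_general {N : ℕ} (L : Matrix (Fin N) (Fin N) ℝ)
    (hL : L.PosSemidef)
    (θ h φ : Fin N → ℝ)
    (hθ : ∀ i, 0 < θ i) (hφ : ∀ i, 0 < φ i)
    (κ τ σ : ℝ) (hκ : 0 < κ) (hτ : 0 < τ)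
    (hσ0 : 0 < σ) (hσ1 : ∀ i, σ < h i / 1) :
    (blk3 (L + Matrix.diagonal θ + σ • Matrix.diagonal h) (σ • 1) 0
      (σ • 1) 1 0
      0 0 ((κ⁻¹ * τ) • Matrix.diagonal φ)).PosDef := by
  have hσh : ∀ i, 0 < θ i + σ * (h i - σ) := fun i => by
    have := div_one (h i) ▸ hσ1 i
    nlinarith [hθ i]
  have hschur : L + diagonal θ + σ • diagonal h - σ • 1 * (σ • 1 : Matrix (Fin N) (Fin N) ℝ)ᴴ =
      L + diagonal fun i => θ i + σ * (h i - σ) := by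
    ext i j
    rcases eq_or_ne i j with rfl | hij
    · simp only [conjTranspose_eq_transpose_of_trivial, transpose_smul, transpose_one,
        Algebra.mul_smul_comm, mul_one, Matrix.sub_apply, Matrix.add_apply, diagonal_apply_eq,
        Matrix.smul_apply, smul_eq_mul, one_apply_eq]
      ring
    · simp [hij]
  have hcoupled := PosDef.fromBlocks_one₂₂ (A := L + diagonal θ + σ • diagonal h)
    (σ • 1 : Matrix (Fin N) (Fin N) ℝ)
    (hschur ▸ PosDef.posSemidef_add hL (posDef_diagonal_iff.mpr hσh))
  rw [conjTranspose_smul, conjTranspose_one, star_trivial] at hcoupled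
  rw [blk3_eq_submatrix_fromBlocks]
  refine (hcoupled.fromBlocks_zero ?_).submatrix (Equiv.injective _)
  exact (posDef_diagonal_iff.mpr hφ).smul (by positivity)

/-- With `M = I` and `0 < σ < min{min_i h_i/m_i, 4 min_i θ_i/(κ_D max_i φ_i)}`
(here `m_i = 1`), the block matrix
`P̄ = [[L+Θ+σH, σI, 0], [σI, I, 0], [0, 0, κ_D⁻¹τΦ]]` is symmetric positive definite,
where `L` is symmetric positive semidefinite (a connected-graph Laplacian). -/
theorem stmt5 {N : ℕ} (L : Matrix (Fin N) (Fin N) ℝ)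
    (hL : L.PosSemidef)
    (θ h φ : Fin N → ℝ)
    (hθ : ∀ i, 0 < θ i) (hh : ∀ i, 0 < h i) (hφ : ∀ i, 0 < φ i)
    (κ τ σ : ℝ) (hκ : 0 < κ) (hτ : 0 < τ)
    (hσ0 : 0 < σ) (hσ1 : ∀ i, σ < h i / 1) (hσ2 : ∀ i j, σ < 4 * θ i / (κ * φ j)) :
    (blk3 (L + Matrix.diagonal θ + σ • Matrix.diagonal h) (σ • 1) 0
      (σ • 1) 1 0
      0 0 ((κ⁻¹ * τ) • Matrix.diagonal φ)).PosDef :=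
  stmt5_general L hL θ h φ hθ hφ κ τ σ hκ hτ hσ0 hσ1
end
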